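/- arXiv:2305.02146 — 4 statements merged into one kernel-verified Lean document; each statement's English description precedes it below -/
import Mathlib

section
/- Let (g_n)_{n≥0} be a sequence of polynomials over ℤ satisfying g_{n+2} = λ·g_{n+1} − g_n. Then for every n ≥ 1 and every i ≥ 1, φ(P_n) divides g_{n+1+i} if and only if φ(P_n) divides g_i. -/
open Polynomial

/-- The characteristic polynomial of the path on `n` vertices:
`P 0 = 1`, `P 1 = X`, `P (n+2) = X * P (n+1) - P n`. -/
noncomputable def pathPoly : ℕ → Polynomial ℤ
  | 0 => 1
  | 1 => X
  | (n + 2) => X * pathPoly (n + 1) - pathPoly n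

lemma pathPoly_coprime : ∀ n, IsCoprime (pathPoly n) (pathPoly (n + 1)) := by
  intro n
  induction n with
  | zero => simpa [pathPoly] using isCoprime_one_left (x := (X : Polynomial ℤ))
  | succ n ih =>
    have h : pathPoly (n + 2) = -pathPoly n + pathPoly (n + 1) * X := by
      rw [pathPoly]; ring
    rw [h]
    exact (ih.symm.neg_right).add_mul_left_right X

lemma g_shift (g : ℕ → Polynomial ℤ)
    (hg : ∀ n, g (n + 2) = X * g (n + 1) - g n) :
    ∀ k m, g (m + k + 2) = pathPoly (k + 1) * g (m + 1) - pathPoly k * g m := by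
  intro k
  induction k using Nat.twoStepInduction with
  | zero => intro m; simp [pathPoly, hg m]
  | one =>
    intro m
    have h3 : m + 1 + 2 = m + 3 := by ring
    have := hg (m + 1)
    rw [h3] at this
    rw [show m + 1 + 2 = m + 3 from rfl, this, hg m]
    show _ = pathPoly 2 * _ - pathPoly 1 * _
    rw [show pathPoly 2 = X * pathPoly 1 - pathPoly 0 from rfl]
    simp [pathPoly]; ring
  | more k ih1 ih2 =>
    intro m
    have h := hg (m + k + 2)
    rw [show m + k + 2 + 2 = m + (k + 2) + 2 by ring,
        show m + k + 2 + 1 = m + (k + 1) + 2 by ring] at h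
    rw [h, ih2 m, ih1 m,
        show pathPoly (k + 2 + 1) = X * pathPoly (k + 2) - pathPoly (k + 1) from rfl,
        show pathPoly (k + 2) = X * pathPoly (k + 1) - pathPoly k from rfl]
    ring

theorem pathPoly_dvd_shift_iff (g : ℕ → Polynomial ℤ)
    (hg : ∀ n, g (n + 2) = X * g (n + 1) - g n)
    (n i : ℕ) (hn : 1 ≤ n) (hi : 1 ≤ i) :
    pathPoly n ∣ g (n + 1 + i) ↔ pathPoly n ∣ g i := by
  obtain ⟨j, rfl⟩ : ∃ j, i = j + 1 := ⟨i - 1, by omega⟩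
  have key : g (n + 1 + (j + 1)) = pathPoly (n + 1) * g (j + 1) - pathPoly n * g j := by
    rw [show n + 1 + (j + 1) = j + n + 2 by ring, g_shift g hg n j]
  rw [key]
  constructor
  · intro h
    have h1 : pathPoly n ∣ pathPoly (n + 1) * g (j + 1) := by
      have := dvd_add h (Dvd.intro (g j) rfl)
      simpa using this
    exact (pathPoly_coprime n).dvd_of_dvd_mul_left h1
  · intro h
    exact dvd_sub (h.mul_left _) (Dvd.intro (g j) rfl)
end

section
/- Let (r_1, r_2) and (s_1, s_2) be pairs of nonnegative integers with r_1 ≤ r_2, r_1 < s_1 ≤ s_2, and r_1 + r_2 = s_1 + s_2. Then φ(P_{r_1})·φ(P_{r_2}) − φ(P_{s_1})·φ(P_{s_2}) = −φ(P_{s_1−r_1−1})·φ(P_{s_2−r_1−1}). -/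
open Polynomial

lemma pathPoly_shift (c : ℕ) : ∀ a, pathPoly (a+1) * pathPoly (a+c+1)
    - pathPoly a * pathPoly (a+c+2) = pathPoly c := by
  intro a
  induction a with
  | zero =>
    rw [show (0:ℕ)+c+1 = c+1 from by omega, show (0:ℕ)+c+2 = c+2 from by omega,
      show pathPoly (c+2) = X * pathPoly (c+1) - pathPoly c from rfl,
      show pathPoly 1 = X from rfl, show pathPoly 0 = 1 from rfl]
    ring
  | succ n ih =>
    rw [show n+1+c+1 = n+c+2 from by omega, show n+1+c+2 = n+c+3 from by omega,
      show pathPoly (n+2) = X * pathPoly (n+1) - pathPoly n from rfl,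
      show pathPoly (n+c+3) = X * pathPoly (n+c+2) - pathPoly (n+c+1) from rfl]
    linear_combination ih

lemma pathPoly_main : ∀ k r t, pathPoly r * pathPoly (r+2*k+t+2)
    - pathPoly (r+k+1) * pathPoly (r+k+t+1) = -(pathPoly k * pathPoly (k+t)) := by
  intro k
  induction k with
  | zero =>
    intro r t
    rw [show r+2*0+t+2 = r+t+2 from by omega, show r+0+1 = r+1 from by omega,
      show r+0+t+1 = r+t+1 from by omega, show (0:ℕ)+t = t from by omega,
      show pathPoly 0 = 1 from rfl]
    linear_combination -pathPoly_shift t r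
  | succ k ih =>
    intro r t
    have h1 := ih r (t+2)
    have h2 := pathPoly_shift t (r+k+1)
    have h3 := pathPoly_shift t k
    rw [show r+2*(k+1)+t+2 = r+2*k+(t+2)+2 from by omega,
      show r+(k+1)+1 = r+k+1+1 from by omega,
      show r+(k+1)+t+1 = r+k+1+t+1 from by omega,
      show k+1+t = k+t+1 from by omega]
    rw [show r+k+(t+2)+1 = r+k+1+t+2 from by omega, show k+(t+2) = k+t+2 from by omega] at h1
    linear_combination h1 - h2 + h3

theorem pathPoly_product_identity (r₁ r₂ s₁ s₂ : ℕ)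
    (h1 : r₁ ≤ r₂) (h2 : r₁ < s₁) (h3 : s₁ ≤ s₂) (h4 : r₁ + r₂ = s₁ + s₂) :
    pathPoly r₁ * pathPoly r₂ - pathPoly s₁ * pathPoly s₂ =
      -(pathPoly (s₁ - r₁ - 1) * pathPoly (s₂ - r₁ - 1)) := by
  set k := s₁ - r₁ - 1 with hk
  set t := s₂ - s₁ with ht
  rw [show s₁ = r₁ + k + 1 from by omega, show s₂ = r₁ + k + t + 1 from by omega,
    show r₂ = r₁ + 2*k + t + 2 from by omega,
    show r₁ + k + t + 1 - r₁ - 1 = k + t from by omega]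
  exact pathPoly_main k r₁ t
end

section
/- For each n ≥ 6, write n = 4s + ε with ε ∈ {0,1,2,3}. Define t_n = (λ²−1)·(φ(P_{n−2}) − λ·φ(P_{n−5})) (the characteristic polynomial of the T-shape tree T_n = P_{2;n−2}^2). Then the lowest nonzero term of t_n equals 1 if ε = 0, (2s+1)λ if ε = 1, −1 if ε = 2, and −2(s+1)λ if ε = 3. -/
open Polynomial

/-- Auxiliary sequence: `hAux m` is the characteristic polynomial of `H (m + 10)`. -/
noncomputable def hAux : ℕ → Polynomial ℤ
  | 0 => X ^ 10 - 9 * X ^ 8 + 26 * X ^ 6 - 30 * X ^ 4 + 13 * X ^ 2 - 1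
  | 1 => X ^ 11 - 10 * X ^ 9 + 34 * X ^ 7 - 48 * X ^ 5 + 29 * X ^ 3 - 6 * X
  | (m + 2) => X * hAux (m + 1) - hAux m

/-- `hPoly n`, for `n ≥ 10`, is the characteristic polynomial of the H-shape tree `H_n`. -/
noncomputable def hPoly (n : ℕ) : Polynomial ℤ := hAux (n - 10)

/-- `tPoly m` is the characteristic polynomial of the T-shape tree `T_m = P_{2;m-2}^2`. -/
noncomputable def tPoly (m : ℕ) : Polynomial ℤ :=
  (X ^ 2 - 1) * (pathPoly (m - 2) - X * pathPoly (m - 5))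

lemma pathPoly_add_two (k : ℕ) :
    pathPoly (k + 2) = X * pathPoly (k + 1) - pathPoly k := rfl

lemma path_coeffs (j : ℕ) :
    (pathPoly (4*j)).coeff 0 = 1 ∧ (pathPoly (4*j)).coeff 1 = 0 ∧
    (pathPoly (4*j+1)).coeff 0 = 0 ∧ (pathPoly (4*j+1)).coeff 1 = 2*(j:ℤ)+1 ∧
    (pathPoly (4*j+2)).coeff 0 = -1 ∧ (pathPoly (4*j+2)).coeff 1 = 0 ∧
    (pathPoly (4*j+3)).coeff 0 = 0 ∧ (pathPoly (4*j+3)).coeff 1 = -(2*(j:ℤ)+2) := by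
  induction j with
  | zero =>
      norm_num [pathPoly, pathPoly_add_two, coeff_sub, coeff_X_mul, coeff_one, coeff_X]
  | succ j ih =>
      obtain ⟨h0, h1, h2, h3, h4, h5, h6, h7⟩ := ih
      have e0 : 4*(j+1) = (4*j+2) + 2 := by ring
      have e1 : 4*(j+1)+1 = (4*j+3) + 2 := by ring
      have e2 : 4*(j+1)+2 = (4*j+2+2) + 2 := by ring
      have e3 : 4*(j+1)+3 = (4*j+3+2) + 2 := by ring
      have c0 : ∀ p : Polynomial ℤ, (X * p).coeff 0 = 0 := by
        intro p; simp [mul_coeff_zero]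
      have c1 : ∀ p : Polynomial ℤ, (X * p).coeff 1 = p.coeff 0 := by
        intro p; simpa using coeff_X_mul p 0
      have r4 : pathPoly (4*j+4) = X * pathPoly (4*j+3) - pathPoly (4*j+2) := by
        rw [show 4*j+4 = (4*j+2)+2 by ring, pathPoly_add_two]
      have r5 : pathPoly (4*j+5) = X * pathPoly (4*j+4) - pathPoly (4*j+3) := by
        rw [show 4*j+5 = (4*j+3)+2 by ring, pathPoly_add_two]
      have r6 : pathPoly (4*j+6) = X * pathPoly (4*j+5) - pathPoly (4*j+4) := by
        rw [show 4*j+6 = (4*j+4)+2 by ring, pathPoly_add_two]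
      have r7 : pathPoly (4*j+7) = X * pathPoly (4*j+6) - pathPoly (4*j+5) := by
        rw [show 4*j+7 = (4*j+5)+2 by ring, pathPoly_add_two]
      have a40 : (pathPoly (4*j+4)).coeff 0 = 1 := by
        rw [r4]; simp only [coeff_sub, c0, h4]; ring
      have a41 : (pathPoly (4*j+4)).coeff 1 = 0 := by
        rw [r4]; simp only [coeff_sub, c1, h6, h5]; ring
      have a50 : (pathPoly (4*j+5)).coeff 0 = 0 := by
        rw [r5]; simp only [coeff_sub, c0, h6]; ring
      have a51 : (pathPoly (4*j+5)).coeff 1 = 2*(j:ℤ)+3 := by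
        rw [r5]; simp only [coeff_sub, c1, a40, h7]; ring
      have a60 : (pathPoly (4*j+6)).coeff 0 = -1 := by
        rw [r6]; simp only [coeff_sub, c0, a40]; ring
      have a61 : (pathPoly (4*j+6)).coeff 1 = 0 := by
        rw [r6]; simp only [coeff_sub, c1, a50, a41]; ring
      have a70 : (pathPoly (4*j+7)).coeff 0 = 0 := by
        rw [r7]; simp only [coeff_sub, c0, a50]; ring
      have a71 : (pathPoly (4*j+7)).coeff 1 = -(2*(j:ℤ)+4) := by
        rw [r7]; simp only [coeff_sub, c1, a60, a51]; ring
      rw [show 4*(j+1) = 4*j+4 by ring]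
      simp only [show 4*j+4+1 = 4*j+5 by ring, show 4*j+4+2 = 4*j+6 by ring,
        show 4*j+4+3 = 4*j+7 by ring]
      refine ⟨a40, a41, a50, by rw [a51]; push_cast; ring, a60, a61, a70,
        by rw [a71]; push_cast; ring⟩

lemma tPoly_coeff0 (n : ℕ) : (tPoly n).coeff 0 = -(pathPoly (n-2)).coeff 0 := by
  have h : tPoly n = X * (X * (pathPoly (n - 2) - X * pathPoly (n - 5)))
      - (pathPoly (n - 2) - X * pathPoly (n - 5)) := by
    unfold tPoly; ring
  rw [h]
  simp [mul_coeff_zero]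

lemma tPoly_coeff1 (n : ℕ) :
    (tPoly n).coeff 1 = -((pathPoly (n-2)).coeff 1 - (pathPoly (n-5)).coeff 0) := by
  have h : tPoly n = X * (X * (pathPoly (n - 2) - X * pathPoly (n - 5)))
      - (pathPoly (n - 2) - X * pathPoly (n - 5)) := by
    unfold tPoly; ring
  rw [h]
  have c1 : ∀ p : Polynomial ℤ, (X * p).coeff 1 = p.coeff 0 := by
    intro p; simpa using coeff_X_mul p 0
  simp [coeff_sub, c1, mul_coeff_zero]

lemma trailing_of_c0 (p : Polynomial ℤ) (c : ℤ) (h : p.coeff 0 = c) (hc : c ≠ 0) :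
    p.natTrailingDegree = 0 ∧ p.trailingCoeff = c := by
  have h0 : p.natTrailingDegree = 0 :=
    natTrailingDegree_eq_zero_of_constantCoeff_ne_zero (by simpa [constantCoeff_apply, h])
  exact ⟨h0, by rw [trailingCoeff, h0, h]⟩

lemma trailing_of_c1 (p : Polynomial ℤ) (c : ℤ) (h0 : p.coeff 0 = 0) (h1 : p.coeff 1 = c)
    (hc : c ≠ 0) : p.natTrailingDegree = 1 ∧ p.trailingCoeff = c := by
  have hp : p ≠ 0 := fun h => by simp [h] at h1; exact hc h1.symm
  have hd : p.natTrailingDegree = 1 := by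
    refine le_antisymm (natTrailingDegree_le_of_ne_zero (by rw [h1]; exact hc)) ?_
    refine le_natTrailingDegree hp fun m hm => ?_
    interval_cases m
    exact h0
  exact ⟨hd, by rw [trailingCoeff, hd, h1]⟩

theorem tPoly_lowest_term (n s ε : ℕ) (hn : 6 ≤ n) (hε : ε < 4) (hns : n = 4 * s + ε) :
    (ε = 0 → (tPoly n).natTrailingDegree = 0 ∧ (tPoly n).trailingCoeff = 1) ∧
    (ε = 1 → (tPoly n).natTrailingDegree = 1 ∧
      (tPoly n).trailingCoeff = 2 * (s : ℤ) + 1) ∧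
    (ε = 2 → (tPoly n).natTrailingDegree = 0 ∧ (tPoly n).trailingCoeff = -1) ∧
    (ε = 3 → (tPoly n).natTrailingDegree = 1 ∧
      (tPoly n).trailingCoeff = -2 * ((s : ℤ) + 1)) := by
  refine ⟨?_, ?_, ?_, ?_⟩ <;> intro he <;> subst he
  · -- ε = 0 : n-2 = 4(s-1)+2
    have hs : 2 ≤ s := by omega
    have e : n - 2 = 4*(s-1)+2 := by omega
    refine trailing_of_c0 _ 1 ?_ one_ne_zero
    rw [tPoly_coeff0, e, (path_coeffs (s-1)).2.2.2.2.1]; ring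
  · -- ε = 1 : n-2 = 4(s-1)+3, n-5 = 4(s-1)
    have hs : 2 ≤ s := by omega
    have e2 : n - 2 = 4*(s-1)+3 := by omega
    have e5 : n - 5 = 4*(s-1) := by omega
    refine trailing_of_c1 _ (2*(s:ℤ)+1) ?_ ?_ (by positivity)
    · rw [tPoly_coeff0, e2, (path_coeffs (s-1)).2.2.2.2.2.2.1]; ring
    · rw [tPoly_coeff1, e2, e5, (path_coeffs (s-1)).2.2.2.2.2.2.2,
        (path_coeffs (s-1)).1]
      have hc : ((s-1 : ℕ) : ℤ) = (s:ℤ) - 1 := by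
        have h1 : 1 ≤ s := by omega
        push_cast [h1]; ring
      rw [hc]; ring
  · -- ε = 2 : n-2 = 4s
    refine trailing_of_c0 _ (-1) ?_ (by norm_num)
    rw [tPoly_coeff0, show n - 2 = 4*s by omega, (path_coeffs s).1]
  · -- ε = 3 : n-2 = 4s+1, n-5 = 4(s-1)+2
    have hs : 1 ≤ s := by omega
    have e2 : n - 2 = 4*s+1 := by omega
    have e5 : n - 5 = 4*(s-1)+2 := by omega
    have hne : (-2*((s:ℤ)+1)) ≠ 0 := by positivity
    refine trailing_of_c1 _ (-2*((s:ℤ)+1)) ?_ ?_ hne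
    · rw [tPoly_coeff0, e2, (path_coeffs s).2.2.1]; ring
    · rw [tPoly_coeff1, e2, e5, (path_coeffs s).2.2.2.1,
        (path_coeffs (s-1)).2.2.2.2.1]; ring
end

section
/- For every integer k ≥ 7, the polynomial identity h_{2k+1} = t_k · (t_{k+1} − t_{k−1}) holds, where h_n is the H-shape polynomial sequence and t_m = (λ²−1)(φ(P_{m−2}) − λφ(P_{m−5})). -/
open Polynomial

noncomputable def uPoly (m : ℕ) : Polynomial ℤ := pathPoly (m + 3) - X * pathPoly m

lemma uPoly_rec (n : ℕ) : uPoly (n + 2) = X * uPoly (n + 1) - uPoly n := by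
  have h1 : pathPoly (n + 5) = X * pathPoly (n + 4) - pathPoly (n + 3) := rfl
  have h2 : pathPoly (n + 2) = X * pathPoly (n + 1) - pathPoly n := rfl
  simp only [uPoly, show n + 2 + 3 = n + 5 from rfl, show n + 1 + 3 = n + 4 from rfl,
    h1, h2]
  ring

lemma hAux_four (n : ℕ) : hAux (n + 4) = (X ^ 2 - 2) * hAux (n + 2) - hAux n := by
  have h1 : hAux (n + 4) = X * hAux (n + 3) - hAux (n + 2) := rfl
  have h2 : hAux (n + 3) = X * hAux (n + 2) - hAux (n + 1) := rfl
  have h3 : hAux (n + 2) = X * hAux (n + 1) - hAux n := rfl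
  rw [h1, h2, h3]
  ring

lemma key (j : ℕ) :
    hAux (2 * j + 5) = (X ^ 2 - 1) ^ 2 * (uPoly (j + 2) * (uPoly (j + 3) - uPoly (j + 1))) := by
  induction j using Nat.twoStepInduction with
  | zero =>
      simp only [uPoly, hAux, pathPoly]
      ring
  | one =>
      simp only [uPoly, hAux, pathPoly]
      ring
  | more j ih1 ih2 =>
      have e : 2 * (j + 2) + 5 = (2 * j + 5) + 4 := by ring
      rw [e, hAux_four, ih1, show 2 * j + 5 + 2 = 2 * (j + 1) + 5 from by ring, ih2]
      have h5 : uPoly (j + 5) = X * uPoly (j + 4) - uPoly (j + 3) := uPoly_rec (j + 3)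
      have h4 : uPoly (j + 4) = X * uPoly (j + 3) - uPoly (j + 2) := uPoly_rec (j + 2)
      have h3 : uPoly (j + 3) = X * uPoly (j + 2) - uPoly (j + 1) := uPoly_rec (j + 1)
      have h2 : uPoly (j + 2) = X * uPoly (j + 1) - uPoly j := uPoly_rec j
      rw [show j + 2 + 2 = j + 4 from rfl, show j + 2 + 3 = j + 5 from rfl,
        show j + 2 + 1 = j + 3 from rfl, h5, h4, h3, h2]
      ring

theorem hPoly_odd_factorization (k : ℕ) (hk : 7 ≤ k) :
    hPoly (2 * k + 1) = tPoly k * (tPoly (k + 1) - tPoly (k - 1)) := by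
  obtain ⟨j, rfl⟩ := Nat.exists_eq_add_of_le hk
  have t1 : tPoly (7 + j) = (X ^ 2 - 1) * uPoly (j + 2) := by
    simp only [tPoly, uPoly, show 7 + j - 2 = j + 2 + 3 from by omega,
      show 7 + j - 5 = j + 2 from by omega]
  have t2 : tPoly (7 + j + 1) = (X ^ 2 - 1) * uPoly (j + 3) := by
    simp only [tPoly, uPoly, show 7 + j + 1 - 2 = j + 3 + 3 from by omega,
      show 7 + j + 1 - 5 = j + 3 from by omega]
  have t3 : tPoly (7 + j - 1) = (X ^ 2 - 1) * uPoly (j + 1) := by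
    simp only [tPoly, uPoly, show 7 + j - 1 - 2 = j + 1 + 3 from by omega,
      show 7 + j - 1 - 5 = j + 1 from by omega]
  have hh : hPoly (2 * (7 + j) + 1) = hAux (2 * j + 5) := by
    simp only [hPoly, show 2 * (7 + j) + 1 - 10 = 2 * j + 5 from by omega]
  rw [hh, t1, t2, t3, key]
  ring
end
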